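/- arXiv:1003.5157 — 3 statements merged into one kernel-verified Lean document; each statement's English description precedes it below -/
import Mathlib

section
/- Fix an integer x ≥ 1 and m ≥ 2. Let W be a finite set of points of ℙ^m with #W ≤ 2x + 1 that fails to impose independent conditions on degree-x forms, and let δ > 0 be the corank of the evaluation map from degree-x homogeneous polynomials in x_0,…,x_m to ℂ^W. Then there is a unique line ℓ ⊂ ℙ^m such that #(ℓ ∩ W) ≥ x + 2, and for this line #(W ∩ ℓ) = x + 1 + δ. -/
/-!
If no line contains `x + 2` points of `W`, every `p ∈ W` is cut out from the other (at most `2x`)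
points by a product of `x` linear forms not vanishing at `p`: those points can be grouped into
`x` pairs and singletons such that no pair is collinear with `p` (possible since each line through
`p` carries at most `x` of them), and the span of each group misses `p`. Then `W` imposes
independent conditions, so `δ > 0` forces a line `ℓ` with `#(W ∩ ℓ) ≥ x + 2`. On `ℓ`, degree-`x`
forms are binary forms and impose exactly `x + 1` conditions, while each of the at most `x - 1`
points off `ℓ` is separated from all other points of `W` by the same argument and adds one
condition. Hence the rank is `x + 1 + #(W \ ℓ)`, that is `#(W ∩ ℓ) = x + 1 + δ`. A second such line
would meet `ℓ` in at most one point, giving `#W ≥ 2x + 3`.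
-/

open MvPolynomial Module

noncomputable section

/-- The evaluation map sending a degree-`x` form in `x_0, …, x_m` to its values at
the chosen representative vectors of the points of `W ⊂ ℙ^m`. -/
def evalMap (m x : ℕ) (W : Finset (Projectivization ℂ (Fin (m+1) → ℂ))) :
    (homogeneousSubmodule (Fin (m+1)) ℂ x) →ₗ[ℂ] (W → ℂ) :=
  (LinearMap.pi fun w : W =>
    (MvPolynomial.aeval ((w : Projectivization ℂ (Fin (m+1) → ℂ)).rep)).toLinearMap) ∘ₗ
    (homogeneousSubmodule (Fin (m+1)) ℂ x).subtype

open scoped LinearAlgebra.Projectivization Finset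

namespace Finset

variable {α β : Type*} [DecidableEq α] [DecidableEq β] {c : α → β} {S : Finset α} {t : ℕ}

theorem card_filter_sdiff_pair_le_of_max {a b : α} (hS : #S ≤ 2 * (t + 1))
    (hc : ∀ y, #{u ∈ S | c u = y} ≤ t + 1) (ha : a ∈ S) (hb : b ∈ S) (hba : c b ≠ c a)
    (hmax : ∀ y, #{u ∈ S | c u = y} ≤ #{u ∈ S | c u = c a}) (y : β) :
    #{u ∈ S \ {a, b} | c u = y} ≤ t := by
  rcases eq_or_ne y (c a) with rfl | hy
  · have hsub : {u ∈ S \ {a, b} | c u = c a} ⊆ {u ∈ S | c u = c a}.erase a := by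
      intro u
      simp +contextual
    have := card_le_card hsub
    have := card_erase_of_mem (show a ∈ {u ∈ S | c u = c a} from mem_filter.2 ⟨ha, rfl⟩)
    have := hc (c a)
    omega
  -- The fibre of `y` is no larger than that of `c a`, and the two are disjoint inside `S.erase b`.
  have hdisj : Disjoint {u ∈ S \ {a, b} | c u = y} {u ∈ S | c u = c a} :=
    disjoint_left.2 fun u hu hu' => hy ((mem_filter.1 hu).2.symm.trans (mem_filter.1 hu').2)
  have hsub : {u ∈ S \ {a, b} | c u = y} ∪ {u ∈ S | c u = c a} ⊆ S.erase b := by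
    intro u
    simp only [mem_union, mem_filter, mem_sdiff, mem_insert, mem_singleton, mem_erase]
    rintro (⟨⟨hu, hne⟩, -⟩ | ⟨hu, hcu⟩)
    · exact ⟨fun h => hne (Or.inr h), hu⟩
    · exact ⟨fun h => hba (h ▸ hcu), hu⟩
  have := card_le_card hsub
  rw [card_union_of_disjoint hdisj, card_erase_of_mem hb] at this
  have : #{u ∈ S \ {a, b} | c u = y} ≤ #{u ∈ S | c u = y} :=
    card_le_card (filter_subset_filter _ sdiff_subset)
  have := hmax y
  omega

theorem exists_injOn_pair_sdiff_card_filter_le (hS : #S ≤ 2 * (t + 1))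
    (hc : ∀ y, #{u ∈ S | c u = y} ≤ t + 1) :
    ∃ D ⊆ S, #D ≤ 2 ∧ Set.InjOn c D ∧ #(S \ D) ≤ 2 * t ∧ ∀ y, #{u ∈ S \ D | c u = y} ≤ t := by
  rcases S.eq_empty_or_nonempty with rfl | hne
  · exact ⟨∅, empty_subset _, by simp, by simp, by simp, by simp⟩
  obtain ⟨a, ha, hmax⟩ := S.exists_max_image (fun s => #{u ∈ S | c u = c s}) hne
  have hmax' : ∀ y, #{u ∈ S | c u = y} ≤ #{u ∈ S | c u = c a} := by
    intro y
    rcases eq_empty_or_nonempty {u ∈ S | c u = y} with h | ⟨s, hs⟩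
    · simp [h]
    · rw [mem_filter] at hs
      rw [← hs.2]
      exact hmax s hs.1
  by_cases hb : ∃ b ∈ S, c b ≠ c a
  · obtain ⟨b, hb, hba⟩ := hb
    have hab : {a, b} ⊆ S := insert_subset ha (singleton_subset_iff.2 hb)
    have hcard : #({a, b} : Finset α) = 2 := card_pair_eq_two_iff.2 fun h => hba (h ▸ rfl)
    refine ⟨{a, b}, hab, card_le_two, by simp [hba.symm], ?_,
      card_filter_sdiff_pair_le_of_max hS hc ha hb hba hmax'⟩
    rw [card_sdiff_of_subset hab, hcard]
    omega
  · simp only [not_exists, not_and, not_not] at hb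
    have hS : #S ≤ t + 1 :=
      (card_le_card fun s hs => mem_filter.2 ⟨hs, hb s hs⟩).trans (hc (c a))
    have hcard : #(S \ {a}) ≤ t := by
      rw [card_sdiff_of_subset (singleton_subset_iff.2 ha), card_singleton]
      omega
    exact ⟨{a}, singleton_subset_iff.2 ha, by simp, by simp, by omega,
      fun y => (card_filter_le _ _).trans hcard⟩

theorem exists_cover_by_injOn_pairs (hS : #S ≤ 2 * t) (hc : ∀ y, #{a ∈ S | c a = y} ≤ t) :
    ∃ B : Fin t → Finset α, (∀ i, B i ⊆ S ∧ #(B i) ≤ 2 ∧ Set.InjOn c (B i)) ∧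
      ∀ a ∈ S, ∃ i, a ∈ B i := by
  induction t generalizing S with
  | zero =>
    obtain rfl : S = ∅ := card_eq_zero.1 (by omega)
    exact ⟨Fin.elim0, fun i => i.elim0, by simp⟩
  | succ t ih =>
    obtain ⟨D, hDS, hD, hcD, hcard, hfib⟩ := exists_injOn_pair_sdiff_card_filter_le hS hc
    obtain ⟨B, hB, hcover⟩ := ih hcard hfib
    refine ⟨Fin.cons D B, Fin.cases ⟨hDS, hD, hcD⟩ fun i => ⟨(hB i).1.trans sdiff_subset, (hB i).2⟩,
      fun a ha => ?_⟩
    by_cases haD : a ∈ D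
    · exact ⟨0, haD⟩
    · obtain ⟨i, hi⟩ := hcover a (mem_sdiff.2 ⟨ha, haD⟩)
      exact ⟨i.succ, by simpa using hi⟩

end Finset

namespace Projectivization

variable {K V : Type*} [Field K] [AddCommGroup V] [Module K V]

theorem submodule_le_iff_rep_mem {p : ℙ K V} {U : Submodule K V} :
    p.submodule ≤ U ↔ p.rep ∈ U := by
  rw [submodule_eq, Submodule.span_singleton_le_iff_mem]

theorem submodule_le_submodule_iff {p q : ℙ K V} : p.submodule ≤ q.submodule ↔ p = q := by
  refine ⟨fun h => submodule_injective ?_, fun h => h ▸ le_rfl⟩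
  have : Module.Finite K q.submodule := Module.finite_of_finrank_eq_succ q.finrank_submodule
  exact Submodule.eq_of_le_of_finrank_eq h (by rw [finrank_submodule, finrank_submodule])

theorem finrank_submodule_sup {p q : ℙ K V} (h : p ≠ q) :
    finrank K ↥(p.submodule ⊔ q.submodule) = 2 := by
  rw [submodule_eq, submodule_eq, ← Submodule.span_insert, ← Matrix.range_cons_cons_empty _ _ ![],
    finrank_span_eq_card (linearIndependent_pair_iff_ne.2 h), Fintype.card_fin]

theorem not_submodule_le_sup {p a b : ℙ K V} (ha : p ≠ a) (hb : p ≠ b)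
    (hab : p.submodule ⊔ a.submodule ≠ p.submodule ⊔ b.submodule) :
    ¬ p.submodule ≤ a.submodule ⊔ b.submodule := by
  intro hp
  have hab' : a ≠ b := by rintro rfl; exact hab rfl
  have : Module.Finite K ↥(a.submodule ⊔ b.submodule) :=
    Module.finite_of_finrank_eq_succ (finrank_submodule_sup hab')
  have h2 : ∀ c, p ≠ c → c.submodule ≤ a.submodule ⊔ b.submodule →
      p.submodule ⊔ c.submodule = a.submodule ⊔ b.submodule := fun c hc hcab =>
    Submodule.eq_of_le_of_finrank_eq (sup_le hp hcab)
      (by rw [finrank_submodule_sup hc, finrank_submodule_sup hab'])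
  exact hab ((h2 a ha le_sup_left).trans (h2 b hb le_sup_right).symm)

open scoped Classical in
theorem card_filter_le_and_le_le_one (W : Finset (ℙ K V)) {L L' : Submodule K V}
    (hL : finrank K L = 2) (hL' : finrank K L' = 2) (hne : L ≠ L') :
    #{w ∈ W | w.submodule ≤ L ∧ w.submodule ≤ L'} ≤ 1 := by
  refine Finset.card_le_one.2 fun p hp q hq => by_contra fun hpq => hne ?_
  simp only [Finset.mem_filter, ← Submodule.mem_projectivization_iff_submodule_le] at hp hq
  exact line_unique hpq L L' hL hL' hp.2.1 hq.2.1 hp.2.2 hq.2.2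

open scoped Classical in
theorem card_filter_add_card_filter_le (W : Finset (ℙ K V)) {L L' : Submodule K V}
    (hL : finrank K L = 2) (hL' : finrank K L' = 2) (hne : L ≠ L') :
    #{w ∈ W | w.submodule ≤ L} + #{w ∈ W | w.submodule ≤ L'} ≤ #W + 1 := by
  rw [← Finset.card_union_add_card_inter, ← Finset.filter_or, ← Finset.filter_and]
  exact add_le_add (Finset.card_filter_le _ _) (card_filter_le_and_le_le_one W hL hL' hne)

end Projectivization

section SeparatedByForm

open Projectivization

variable {K σ : Type*} [Field K]

def SeparatedByForm (t : ℕ) (S : Set (ℙ K (σ → K))) (p : ℙ K (σ → K)) : Prop :=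
  ∃ g : MvPolynomial σ K, g.IsHomogeneous t ∧ (∀ s ∈ S, eval s.rep g = 0) ∧ eval p.rep g ≠ 0

theorem SeparatedByForm.mono {t : ℕ} {S T : Set (ℙ K (σ → K))} {p : ℙ K (σ → K)}
    (h : SeparatedByForm t S p) (hTS : T ⊆ S) : SeparatedByForm t T p :=
  let ⟨g, hg, hS, hp⟩ := h
  ⟨g, hg, fun s hs => hS s (hTS hs), hp⟩

theorem separatedByForm_iUnion {ι : Type*} [Fintype ι] {t : ι → ℕ} {S : ι → Set (ℙ K (σ → K))}
    {p : ℙ K (σ → K)} (h : ∀ i, SeparatedByForm (t i) (S i) p) :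
    SeparatedByForm (∑ i, t i) (⋃ i, S i) p := by
  choose g hg hS hp using h
  refine ⟨∏ i, g i, IsHomogeneous.prod _ _ _ fun i _ => hg i, fun s hs => ?_, ?_⟩
  · obtain ⟨i, hi⟩ := Set.mem_iUnion.1 hs
    rw [map_prod]
    exact Finset.prod_eq_zero (Finset.mem_univ i) (hS i s hi)
  · rw [map_prod]
    exact Finset.prod_ne_zero_iff.2 fun i _ => hp i

theorem separatedByForm_one_of_le [Fintype σ] {S : Set (ℙ K (σ → K))} {p : ℙ K (σ → K)}
    {U : Submodule K (σ → K)} (hS : ∀ s ∈ S, s.submodule ≤ U) (hp : ¬ p.submodule ≤ U) :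
    SeparatedByForm 1 S p := by
  classical
  rw [submodule_le_iff_rep_mem] at hp
  obtain ⟨f, hfp, hUf⟩ := U.exists_le_ker_of_notMem hp
  have heval : ∀ v, eval v (∑ i, C (f (Pi.single i 1)) * X i) = f v := fun v => by
    simp only [f.pi_apply_eq_sum_univ v, map_sum, map_mul, eval_C, eval_X, smul_eq_mul, mul_comm]
    congr! 3 with i
    ext j
    simp [Pi.single_apply, eq_comm]
  refine ⟨_, IsHomogeneous.sum _ _ _ fun i _ => isHomogeneous_C_mul_X _ i, fun s hs => ?_,
    by rwa [heval]⟩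
  rw [heval]
  exact hUf (submodule_le_iff_rep_mem.1 (hS s hs))

theorem separatedByForm_one_of_injOn [Fintype σ] {B : Finset (ℙ K (σ → K))} {p : ℙ K (σ → K)}
    (hp : p ∉ B) (hB : #B ≤ 2)
    (hinj : Set.InjOn (fun s : ℙ K (σ → K) => p.submodule ⊔ s.submodule) B) :
    SeparatedByForm 1 B p := by
  classical
  interval_cases h : #B
  · rw [Finset.card_eq_zero.1 h]
    refine separatedByForm_one_of_le (U := ⊥) (by simp) fun hp' => ?_
    simpa [finrank_submodule] using Submodule.finrank_mono hp'
  · obtain ⟨a, rfl⟩ := Finset.card_eq_one.1 h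
    refine separatedByForm_one_of_le (U := a.submodule) (by simp)
      (mt submodule_le_submodule_iff.1 (by simpa using hp))
  · obtain ⟨a, b, hab, rfl⟩ := Finset.card_eq_two.1 h
    simp only [Finset.mem_insert, Finset.mem_singleton, not_or] at hp
    refine separatedByForm_one_of_le (U := a.submodule ⊔ b.submodule) (by simp)
      (not_submodule_le_sup hp.1 hp.2 fun h => hab (hinj (by simp) (by simp) h))

open scoped Classical in
theorem separatedByForm_of_card_le [Fintype σ] {t : ℕ} {S : Finset (ℙ K (σ → K))}
    {p : ℙ K (σ → K)} (hp : p ∉ S) (hS : #S ≤ 2 * t)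
    (hlines : ∀ L : Submodule K (σ → K), finrank K L = 2 → p.submodule ≤ L →
      #{s ∈ S | s.submodule ≤ L} ≤ t) :
    SeparatedByForm t S p := by
  set c : ℙ K (σ → K) → Submodule K (σ → K) := fun s => p.submodule ⊔ s.submodule
  have hfib : ∀ L, #{s ∈ S | c s = L} ≤ t := by
    intro L
    rcases Finset.eq_empty_or_nonempty {s ∈ S | c s = L} with h | ⟨s, hs⟩
    · simp [h]
    obtain ⟨hsS, rfl⟩ := Finset.mem_filter.1 hs
    have hsp : p ≠ s := fun h => hp (h ▸ hsS)
    refine (Finset.card_le_card fun u hu => ?_).trans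
      (hlines (c s) (finrank_submodule_sup hsp) le_sup_left)
    rw [Finset.mem_filter] at hu ⊢
    exact ⟨hu.1, hu.2 ▸ le_sup_right⟩
  obtain ⟨B, hB, hcover⟩ := Finset.exists_cover_by_injOn_pairs hS hfib
  have hsep := separatedByForm_iUnion (t := fun _ => 1) fun i =>
    separatedByForm_one_of_injOn (fun h => hp ((hB i).1 h)) (hB i).2.1 (hB i).2.2
  simp only [Finset.sum_const, Finset.card_univ, Fintype.card_fin, smul_eq_mul, mul_one] at hsep
  exact hsep.mono fun s hs => Set.mem_iUnion.2 (hcover s hs)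

end SeparatedByForm

theorem MvPolynomial.IsHomogeneous.mem_span_X_zero_pow_mul_X_one_pow {R : Type*} [CommSemiring R]
    {q : MvPolynomial (Fin 2) R} {n : ℕ} (hq : q.IsHomogeneous n) :
    q ∈ Submodule.span R (Set.range fun i : Fin (n + 1) => (X 0 ^ (i : ℕ) * X 1 ^ (n - i) :
      MvPolynomial (Fin 2) R)) := by
  rw [q.as_sum]
  refine Submodule.sum_mem _ fun d hd => ?_
  have hdeg : d 0 + d 1 = n := by
    simpa [Finsupp.weight_apply, Finsupp.sum_fintype, Fin.sum_univ_two] using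
      hq (mem_support_iff.1 hd)
  have hmono : monomial d (coeff d q) = coeff d q • (X 0 ^ d 0 * X 1 ^ d 1) := by
    rw [smul_eq_C_mul, monomial_eq, Finsupp.prod_fintype _ _ fun _ => pow_zero _, Fin.prod_univ_two]
  rw [hmono]
  refine Submodule.smul_mem _ _ (Submodule.subset_span ⟨⟨d 0, by omega⟩, ?_⟩)
  simp only [show n - d 0 = d 1 by omega]

section EvalMap

open Projectivization LinearMap
open scoped Classical

variable {m x : ℕ}

theorem finrank_range_evalMap_mono {S T : Finset (ℙ ℂ (Fin (m+1) → ℂ))} (h : S ⊆ T) :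
    finrank ℂ (range (evalMap m x S)) ≤ finrank ℂ (range (evalMap m x T)) := by
  have : evalMap m x S = funLeft ℂ ℂ (fun s : S => (⟨s, h s.2⟩ : T)) ∘ₗ evalMap m x T := rfl
  rw [this, range_comp]
  exact Submodule.finrank_map_le _ _

theorem finrank_range_evalMap_insert {q : ℙ ℂ (Fin (m+1) → ℂ)} {S : Finset (ℙ ℂ (Fin (m+1) → ℂ))}
    (hsep : SeparatedByForm x S q) :
    finrank ℂ (range (evalMap m x (insert q S))) = finrank ℂ (range (evalMap m x S)) + 1 := by
  set R := range (evalMap m x (insert q S))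
  let res : (↥(insert q S) → ℂ) →ₗ[ℂ] (S → ℂ) :=
    funLeft ℂ ℂ fun s : S => ⟨s, Finset.mem_insert_of_mem s.2⟩
  let f : R →ₗ[ℂ] (S → ℂ) := res.domRestrict R
  have hrange : range f = range (evalMap m x S) := by
    rw [range_domRestrict, ← range_comp]
    rfl
  let q' : ↥(insert q S) := ⟨q, Finset.mem_insert_self q S⟩
  let evq : ker f →ₗ[ℂ] ℂ := proj q' ∘ₗ R.subtype ∘ₗ (ker f).subtype
  have hinj : Function.Injective evq := by
    intro k₁ k₂ h
    ext ⟨t, ht⟩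
    rcases Finset.mem_insert.1 ht with rfl | htS
    · exact h
    · exact (congr_fun (mem_ker.1 k₁.2) ⟨t, htS⟩).trans (congr_fun (mem_ker.1 k₂.2) ⟨t, htS⟩).symm
  have hpos : 0 < finrank ℂ (ker f) := by
    obtain ⟨g, hg, hgS, hgq⟩ := hsep
    let v : R := ⟨_, mem_range_self (evalMap m x (insert q S)) ⟨g, hg⟩⟩
    have hv : v ∈ ker f := by
      refine mem_ker.2 (funext fun s => ?_)
      exact hgS s (Finset.mem_coe.2 s.2)
    have hne : (⟨v, hv⟩ : ker f) ≠ 0 := fun h =>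
      hgq (congr_fun (congr_arg (fun k : ker f => ((k : R) : ↥(insert q S) → ℂ)) h) q')
    exact Module.finrank_pos_iff (R := ℂ).2 (nontrivial_of_ne _ _ hne)
  have h1 := finrank_le_finrank_of_injective hinj
  have h2 := f.finrank_range_add_finrank_ker
  rw [hrange] at h2
  rw [finrank_self] at h1
  omega

theorem finrank_range_evalMap_eq_add_card {W B : Finset (ℙ ℂ (Fin (m+1) → ℂ))} (hBW : B ⊆ W)
    (hsep : ∀ q ∈ B, SeparatedByForm x ↑(W.erase q) q) :
    finrank ℂ (range (evalMap m x W)) = finrank ℂ (range (evalMap m x (W \ B))) + #B := by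
  induction B using Finset.induction_on generalizing W with
  | empty => rw [Finset.sdiff_empty, Finset.card_empty, add_zero]
  | insert q B hqB ih =>
    have hqW : q ∈ W := hBW (Finset.mem_insert_self q B)
    have hW := finrank_range_evalMap_insert (hsep q (Finset.mem_insert_self q B))
    rw [Finset.insert_erase hqW] at hW
    have hB : B ⊆ W.erase q := fun b hb =>
      Finset.mem_erase.2 ⟨fun h => hqB (h ▸ hb), hBW (Finset.mem_insert_of_mem hb)⟩
    rw [hW, ih hB fun b hb => (hsep b (Finset.mem_insert_of_mem hb)).mono ?_,
      Finset.erase_sdiff_comm, ← Finset.sdiff_insert, Finset.card_insert_of_notMem hqB]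
    · ring
    · exact Finset.coe_subset.2 (Finset.erase_subset_erase b (Finset.erase_subset q W))

theorem finrank_range_evalMap_eq_card_of_lines_le {W : Finset (ℙ ℂ (Fin (m+1) → ℂ))}
    (hW : #W ≤ 2 * x + 1)
    (hlines : ∀ L : Submodule ℂ (Fin (m+1) → ℂ), finrank ℂ L = 2 →
      #{w ∈ W | w.submodule ≤ L} ≤ x + 1) :
    finrank ℂ (range (evalMap m x W)) = #W := by
  rw [finrank_range_evalMap_eq_add_card subset_rfl fun p hp => ?_, Finset.sdiff_self]
  · simp [Submodule.eq_bot_of_subsingleton]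
  refine separatedByForm_of_card_le (Finset.notMem_erase p W)
    (by rw [Finset.card_erase_of_mem hp]; omega) fun L hL hpL => ?_
  rw [Finset.filter_erase, Finset.card_erase_of_mem (Finset.mem_filter.2 ⟨hp, hpL⟩)]
  have := hlines L hL
  omega

theorem finrank_range_evalMap_le_of_collinear {S : Finset (ℙ ℂ (Fin (m+1) → ℂ))}
    {ℓ : Submodule ℂ (Fin (m+1) → ℂ)} (hℓ : finrank ℂ ℓ = 2) (hS : ∀ s ∈ S, s.submodule ≤ ℓ) :
    finrank ℂ (range (evalMap m x S)) ≤ x + 1 := by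
  let b := Module.finBasisOfFinrankEq ℂ ℓ hℓ
  -- `restr P` is `P` restricted to `ℓ`, written in the coordinates of the basis `b`
  let restr : MvPolynomial (Fin (m+1)) ℂ →ₐ[ℂ] MvPolynomial (Fin 2) ℂ :=
    aeval fun i => C ((b 0 : Fin (m+1) → ℂ) i) * X 0 + C ((b 1 : Fin (m+1) → ℂ) i) * X 1
  let coords : S → Fin 2 → ℂ := fun s => b.repr ⟨s.1.rep, submodule_le_iff_rep_mem.1 (hS s s.2)⟩
  have hcoords : ∀ s P, aeval (coords s) (restr P) = aeval (s : ℙ ℂ (Fin (m+1) → ℂ)).rep P := by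
    intro s P
    rw [comp_aeval_apply]
    congr 2 with i
    have hrep := congr_arg (fun v : ℓ => (v : Fin (m+1) → ℂ) i)
      (b.sum_repr ⟨(s : ℙ ℂ (Fin (m+1) → ℂ)).rep, submodule_le_iff_rep_mem.1 (hS s s.2)⟩)
    simp only [Fin.sum_univ_two, Submodule.coe_add, Submodule.coe_smul, Pi.add_apply,
      Pi.smul_apply, smul_eq_mul] at hrep
    simp only [map_add, map_mul, aeval_C, aeval_X, Algebra.algebraMap_self, RingHom.id_apply,
      ← hrep]
    ring
  let evS : MvPolynomial (Fin 2) ℂ →ₗ[ℂ] (S → ℂ) :=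
    LinearMap.pi fun s => (aeval (coords s)).toLinearMap
  let mon : Fin (x + 1) → MvPolynomial (Fin 2) ℂ := fun i => X 0 ^ (i : ℕ) * X 1 ^ (x - i)
  have hle : range (evalMap m x S) ≤ (Submodule.span ℂ (Set.range mon)).map evS := by
    rintro _ ⟨⟨P, hP⟩, rfl⟩
    have hrestr : (restr P).IsHomogeneous x := by
      simpa using hP.aeval _ fun i => (isHomogeneous_C_mul_X _ 0).add (isHomogeneous_C_mul_X _ 1)
    refine ⟨restr P, hrestr.mem_span_X_zero_pow_mul_X_one_pow, funext fun s => ?_⟩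
    rw [LinearMap.pi_apply, AlgHom.toLinearMap_apply, hcoords]
    rfl
  calc finrank ℂ (range (evalMap m x S))
      ≤ finrank ℂ ((Submodule.span ℂ (Set.range mon)).map evS) := Submodule.finrank_mono hle
    _ = finrank ℂ (Submodule.span ℂ (Set.range (evS ∘ mon))) := by
      rw [Submodule.map_span, Set.range_comp]
    _ ≤ x + 1 := (finrank_range_le_card _).trans (by simp)

theorem finrank_range_evalMap_of_rich_line {W : Finset (ℙ ℂ (Fin (m+1) → ℂ))}
    (hW : #W ≤ 2 * x + 1) {ℓ : Submodule ℂ (Fin (m+1) → ℂ)} (hℓ : finrank ℂ ℓ = 2)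
    (hrich : x + 2 ≤ #{w ∈ W | w.submodule ≤ ℓ}) :
    finrank ℂ (range (evalMap m x W)) = x + 1 + #{w ∈ W | ¬ w.submodule ≤ ℓ} := by
  set A := {w ∈ W | w.submodule ≤ ℓ}
  set B := {w ∈ W | ¬ w.submodule ≤ ℓ}
  have hAB : #A + #B = #W := Finset.card_filter_add_card_filter_not _
  have hrankA : finrank ℂ (range (evalMap m x A)) = x + 1 := by
    obtain ⟨T, hTA, hT⟩ := Finset.exists_subset_card_eq (show x + 1 ≤ #A by omega)
    have hrankT := finrank_range_evalMap_eq_card_of_lines_le (m := m) (W := T) (by omega)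
      fun L _ => (Finset.card_filter_le _ _).trans hT.le
    have := finrank_range_evalMap_mono (x := x) hTA
    have := finrank_range_evalMap_le_of_collinear (x := x) (S := A) hℓ fun a ha =>
      (Finset.mem_filter.1 ha).2
    omega
  have hsep : ∀ q ∈ B, SeparatedByForm x ↑(W.erase q) q := by
    intro q hq
    obtain ⟨hqW, hqℓ⟩ := Finset.mem_filter.1 hq
    refine separatedByForm_of_card_le (Finset.notMem_erase q W)
      (by rw [Finset.card_erase_of_mem hqW]; omega) fun L hL hqL => ?_
    -- `L ≠ ℓ` since `q ∈ L`, so `L` meets `ℓ` in at most one point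
    have hsub : {s ∈ W.erase q | s.submodule ≤ L} ⊆
        {w ∈ W | w.submodule ≤ L ∧ w.submodule ≤ ℓ} ∪ B.erase q := by
      intro s
      simp only [Finset.mem_filter, Finset.mem_erase, Finset.mem_union, B]
      tauto
    have := (Finset.card_le_card hsub).trans (Finset.card_union_le _ _)
    have := card_filter_le_and_le_le_one W hL hℓ fun h => hqℓ (h ▸ hqL)
    have := Finset.card_erase_of_mem hq
    omega
  have hWB : W \ B = A := by
    rw [show B = W \ A from Finset.filter_not _ _,
      Finset.sdiff_sdiff_eq_self (Finset.filter_subset _ W)]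
  rw [finrank_range_evalMap_eq_add_card (Finset.filter_subset _ W) hsep, hWB, hrankA]

end EvalMap

theorem line_from_failing_conditions_general (m x : ℕ)
    (W : Finset (Projectivization ℂ (Fin (m+1) → ℂ))) (hW : W.card ≤ 2 * x + 1)
    (δ : ℕ) (hδpos : 0 < δ)
    (hδ : finrank ℂ (LinearMap.range (evalMap m x W)) + δ = W.card) :
    ∃ ℓ : Submodule ℂ (Fin (m+1) → ℂ), finrank ℂ ℓ = 2 ∧
      x + 2 ≤ ((W : Set (Projectivization ℂ (Fin (m+1) → ℂ))) ∩
        {p | p.submodule ≤ ℓ}).ncard ∧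
      ((W : Set (Projectivization ℂ (Fin (m+1) → ℂ))) ∩
        {p | p.submodule ≤ ℓ}).ncard = x + 1 + δ ∧
      ∀ ℓ' : Submodule ℂ (Fin (m+1) → ℂ), finrank ℂ ℓ' = 2 →
        x + 2 ≤ ((W : Set (Projectivization ℂ (Fin (m+1) → ℂ))) ∩
          {p | p.submodule ≤ ℓ'}).ncard → ℓ' = ℓ := by
  classical
  have hncard : ∀ L : Submodule ℂ (Fin (m+1) → ℂ),
      ((W : Set (Projectivization ℂ (Fin (m+1) → ℂ))) ∩ {p | p.submodule ≤ L}).ncard =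
        #{w ∈ W | w.submodule ≤ L} := fun L => by
    rw [← Set.ncard_coe_finset, Finset.coe_filter]
    rfl
  obtain ⟨ℓ, hℓ, hrich⟩ : ∃ ℓ : Submodule ℂ (Fin (m+1) → ℂ), finrank ℂ ℓ = 2 ∧
      x + 2 ≤ #{w ∈ W | w.submodule ≤ ℓ} := by
    by_contra! hpoor
    have := finrank_range_evalMap_eq_card_of_lines_le hW fun L hL =>
      Nat.le_of_lt_succ (hpoor L hL)
    omega
  have hrank := finrank_range_evalMap_of_rich_line hW hℓ hrich
  have hsplit := Finset.card_filter_add_card_filter_not (s := W) fun w => w.submodule ≤ ℓ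
  refine ⟨ℓ, hℓ, by rw [hncard]; exact hrich, by rw [hncard]; omega, fun ℓ' hℓ' hrich' => ?_⟩
  by_contra hne
  rw [hncard] at hrich'
  have := Projectivization.card_filter_add_card_filter_le W hℓ hℓ' (Ne.symm hne)
  omega

/-- **Lemma 2 of Ballico–Bernardi** (reduced case).  Let `W ⊂ ℙ^m`, `m ≥ 2`, be a
finite set of at most `2x + 1` points failing to impose independent conditions on
degree-`x` forms with corank `δ > 0`.  Then there is a unique line `ℓ ⊂ ℙ^m`
with `#(ℓ ∩ W) ≥ x + 2`, and for it `#(W ∩ ℓ) = x + 1 + δ`. -/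
theorem line_from_failing_conditions (m x : ℕ) (hm : 2 ≤ m) (hx : 1 ≤ x)
    (W : Finset (Projectivization ℂ (Fin (m+1) → ℂ))) (hW : W.card ≤ 2 * x + 1)
    (δ : ℕ) (hδpos : 0 < δ)
    (hδ : finrank ℂ (LinearMap.range (evalMap m x W)) + δ = W.card) :
    ∃ ℓ : Submodule ℂ (Fin (m+1) → ℂ), finrank ℂ ℓ = 2 ∧
      x + 2 ≤ ((W : Set (Projectivization ℂ (Fin (m+1) → ℂ))) ∩
        {p | p.submodule ≤ ℓ}).ncard ∧
      ((W : Set (Projectivization ℂ (Fin (m+1) → ℂ))) ∩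
        {p | p.submodule ≤ ℓ}).ncard = x + 1 + δ ∧
      ∀ ℓ' : Submodule ℂ (Fin (m+1) → ℂ), finrank ℂ ℓ' = 2 →
        x + 2 ≤ ((W : Set (Projectivization ℂ (Fin (m+1) → ℂ))) ∩
          {p | p.submodule ≤ ℓ'}).ncard → ℓ' = ℓ :=
  line_from_failing_conditions_general m x W hW δ hδpos hδ

end
end

section
/- Let C ⊂ ℙ^2 be a smooth conic (the zero locus of a nondegenerate quadratic form in x_0, x_1, x_2 over ℂ). Fix an integer d ≥ 1 and a finite set S ⊂ C with #S ≤ 2d + 1. Then S imposes independent conditions on degree-d forms; equivalently, the d-th powers { L_s^d : s ∈ S } of linear forms representing the points of S are linearly independent in the space of degree-d homogeneous polynomials. -/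
open MvPolynomial Module

noncomputable section

/-- The linear form `∑ v i • x i` associated to a vector `v : ℂ³`. -/
def toLinForm (m : ℕ) (v : Fin (m+1) → ℂ) : MvPolynomial (Fin (m+1)) ℂ :=
  ∑ i, MvPolynomial.C (v i) * MvPolynomial.X i

/-- The `d`-th power `L_p^d` of a linear form representing the point `p ∈ ℙ^m`. -/
def vpow (m d : ℕ) (p : Projectivization ℂ (Fin (m+1) → ℂ)) : MvPolynomial (Fin (m+1)) ℂ :=
  (toLinForm m p.rep) ^ d

/-!
A line meets a smooth conic in at most two points: if `s = x p + y r` with `p, r, s` on the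
conic, then `0 = q s = x y · polar q p r`, and `polar q p r = 0` would make the plane spanned by
`p` and `r` totally isotropic, impossible for a nondegenerate form in dimension 3. Splitting
the at most `2d` points of `S \ {s}` into at most `d` pairs, the product of lines through the
pairs is a form of degree `d` vanishing on `S \ {s}` but not at `s`; so evaluation is surjective.
Since the coefficient of `x^α` in `L_v^d` is `multinomial α · v^α`, a relation
`∑ c_s L_s^d = 0` forces `∑ c_s F(s) = 0` for every form `F` of degree `d`, and applying this to
the separating forms gives linear independence.
-/

open Finset
open scoped LinearAlgebra.Projectivization

section Isotropic

variable {K V : Type*} [Field K] [AddCommGroup V] [Module K V] [FiniteDimensional K V]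

theorem LinearMap.BilinForm.two_mul_finrank_le_of_le_orthogonal {B : LinearMap.BilinForm K V}
    (hB : B.Nondegenerate) {W : Submodule K V} (hW : W ≤ B.orthogonal W) :
    2 * finrank K W ≤ finrank K V := by
  have h := Submodule.finrank_mono hW
  rw [LinearMap.BilinForm.finrank_orthogonal hB] at h
  have := Submodule.finrank_le W
  omega

theorem QuadraticMap.mem_span_singleton_or_of_mem_span_pair {q : QuadraticForm K V}
    (hq : q.polarBilin.Nondegenerate) (hV : finrank K V < 4) {u v w : V}
    (hu : q u = 0) (hv : q v = 0) (hw : q w = 0) (h : w ∈ Submodule.span K {u, v}) :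
    w ∈ K ∙ u ∨ w ∈ K ∙ v := by
  obtain ⟨x, y, rfl⟩ := Submodule.mem_span_pair.mp h
  by_cases huv : polar q u v = 0
  · have hiso : Submodule.span K {u, v} ≤
        LinearMap.BilinForm.orthogonal q.polarBilin (Submodule.span K {u, v}) := by
      intro m hm
      rw [LinearMap.BilinForm.mem_orthogonal_iff]
      intro n hn
      obtain ⟨a, b, rfl⟩ := Submodule.mem_span_pair.mp hm
      obtain ⟨c, e, rfl⟩ := Submodule.mem_span_pair.mp hn
      simp [polar_add_right, polar_smul_right, polar_self, polar_comm q v u, hu, hv, huv]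
    have hdim := LinearMap.BilinForm.two_mul_finrank_le_of_le_orthogonal hq hiso
    by_cases hu0 : u = 0
    · subst hu0
      simp [Submodule.mem_span_singleton]
    · have hline : K ∙ u = Submodule.span K {u, v} :=
        Submodule.eq_of_le_of_finrank_le (Submodule.span_mono (by simp))
          (by rw [finrank_span_singleton hu0]; omega)
      exact .inl (hline ▸ h)
  · have hxy : x * y * polar q u v = 0 := by
      rw [QuadraticMap.map_add (⇑q), QuadraticMap.map_smul, QuadraticMap.map_smul, hu, hv,
        polar_smul_left, polar_smul_right] at hw
      simpa [mul_assoc] using hw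
    rcases mul_eq_zero.mp ((mul_eq_zero.mp hxy).resolve_right huv) with rfl | rfl <;>
      simp [Submodule.mem_span_singleton]

end Isotropic

theorem Projectivization.eq_of_rep_mem_span_rep {K V : Type*} [DivisionRing K] [AddCommGroup V]
    [Module K V] {p r : ℙ K V} (h : r.rep ∈ K ∙ p.rep) : r = p := by
  obtain ⟨a, ha⟩ := Submodule.mem_span_singleton.mp h
  rw [← p.mk_rep, ← r.mk_rep, Projectivization.mk_eq_mk_iff']
  exact ⟨a, ha⟩

theorem rep_notMem_span_image_rep_of_card_le_two {K V : Type*} [Field K] [AddCommGroup V]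
    [Module K V] [FiniteDimensional K V] {q : QuadraticForm K V}
    (hq : q.polarBilin.Nondegenerate) (hV : finrank K V < 4)
    {P : Finset (ℙ K V)} (hP : ∀ p ∈ P, q p.rep = 0) (hcard : #P ≤ 2)
    {s : ℙ K V} (hs : q s.rep = 0) (hsP : s ∉ P) :
    s.rep ∉ Submodule.span K (Projectivization.rep '' (P : Set (ℙ K V))) := by
  classical
  intro hmem
  interval_cases h : #P
  · rw [card_eq_zero.mp h] at hmem
    simp only [coe_empty, Set.image_empty, Submodule.span_empty, Submodule.mem_bot] at hmem
    exact s.rep_nonzero hmem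
  · obtain ⟨p, rfl⟩ := card_eq_one.mp h
    simp only [coe_singleton, Set.image_singleton] at hmem
    exact hsP (mem_singleton.mpr (Projectivization.eq_of_rep_mem_span_rep hmem))
  · obtain ⟨p, r, -, rfl⟩ := card_eq_two.mp h
    simp only [coe_insert, coe_singleton, Set.image_insert_eq, Set.image_singleton] at hmem
    rcases QuadraticMap.mem_span_singleton_or_of_mem_span_pair hq hV (hP p (by simp))
      (hP r (by simp)) hs hmem with hp | hr
    · exact hsP (by simp [Projectivization.eq_of_rep_mem_span_rep hp])
    · exact hsP (by simp [Projectivization.eq_of_rep_mem_span_rep hr])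

theorem eval_toLinForm (m : ℕ) (c w : Fin (m+1) → ℂ) :
    eval w (toLinForm m c) = ∑ i, c i * w i := by
  simp [toLinForm]

theorem toLinForm_isHomogeneous (m : ℕ) (c : Fin (m+1) → ℂ) : (toLinForm m c).IsHomogeneous 1 :=
  IsHomogeneous.sum _ _ _ fun _ _ => (isHomogeneous_C _ _).mul (isHomogeneous_X _ _)

theorem exists_toLinForm_separating {m : ℕ} {T : Set (Fin (m+1) → ℂ)} {v : Fin (m+1) → ℂ}
    (hv : v ∉ Submodule.span ℂ T) :
    ∃ c, (∀ u ∈ T, eval u (toLinForm m c) = 0) ∧ eval v (toLinForm m c) ≠ 0 := by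
  obtain ⟨f, hfv, hfT⟩ := Submodule.exists_dual_map_eq_bot_of_notMem hv inferInstance
  have hf : ∀ w, eval w (toLinForm m fun i => f (Pi.single i 1)) = f w := fun w => by
    rw [eval_toLinForm, LinearMap.pi_apply_eq_sum_univ f w]
    refine sum_congr rfl fun i _ => ?_
    rw [smul_eq_mul, mul_comm]
    congr 2
    ext j
    simp [Pi.single_apply, eq_comm]
  refine ⟨fun i => f (Pi.single i 1), fun u hu => ?_, by rwa [hf]⟩
  rw [hf, ← Submodule.mem_bot ℂ, ← hfT]
  exact Submodule.mem_map_of_mem (Submodule.subset_span hu)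

theorem exists_isHomogeneous_separating {q : QuadraticForm ℂ (Fin (2+1) → ℂ)}
    (hq : q.polarBilin.Nondegenerate) {s : ℙ ℂ (Fin (2+1) → ℂ)}
    (hs : q s.rep = 0) (n : ℕ) (T : Finset (ℙ ℂ (Fin (2+1) → ℂ)))
    (hT : ∀ t ∈ T, q t.rep = 0) (hsT : s ∉ T) (hcard : #T ≤ 2 * n) :
    ∃ F : MvPolynomial (Fin (2+1)) ℂ, F.IsHomogeneous n ∧
      (∀ t ∈ T, eval t.rep F = 0) ∧ eval s.rep F ≠ 0 := by
  classical
  induction n generalizing T with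
  | zero =>
    rw [card_eq_zero.mp (by omega : #T = 0)]
    exact ⟨1, isHomogeneous_one _ _, by simp, by simp⟩
  | succ n ih =>
    obtain ⟨P, hPT, hP⟩ := exists_subset_card_eq (min_le_right 2 #T)
    obtain ⟨F, hF, hFT, hFs⟩ := ih (T \ P) (fun t ht => hT t (mem_sdiff.mp ht).1)
      (fun h => hsT (mem_sdiff.mp h).1) (by rw [card_sdiff_of_subset hPT, hP]; omega)
    obtain ⟨c, hcP, hcs⟩ := exists_toLinForm_separating
      (rep_notMem_span_image_rep_of_card_le_two hq (by simp) (fun t ht => hT t (hPT ht))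
        (hP ▸ min_le_left 2 #T) hs (fun h => hsT (hPT h)))
    refine ⟨toLinForm 2 c * F, ?_, fun t ht => ?_, by simp [hcs, hFs]⟩
    · simpa [add_comm] using (toLinForm_isHomogeneous 2 c).mul hF
    · by_cases htP : t ∈ P
      · simp [hcP t.rep (Set.mem_image_of_mem _ htP)]
      · simp [hFT t (mem_sdiff.mpr ⟨ht, htP⟩)]

theorem surjective_evalMap_of_separating {m x : ℕ}
    {W : Finset (ℙ ℂ (Fin (m+1) → ℂ))}
    (h : ∀ s ∈ W, ∃ F : MvPolynomial (Fin (m+1)) ℂ, F.IsHomogeneous x ∧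
      (∀ t ∈ W, t ≠ s → eval t.rep F = 0) ∧ eval s.rep F ≠ 0) :
    Function.Surjective (evalMap m x W) := by
  classical
  rw [← LinearMap.range_eq_top, eq_top_iff, ← (Pi.basisFun ℂ W).span_eq, Submodule.span_le]
  rintro _ ⟨s, rfl⟩
  obtain ⟨F, hF, hFW, hFs⟩ := h s s.2
  refine ⟨(eval (s : ℙ ℂ (Fin (m+1) → ℂ)).rep F)⁻¹ •
    ⟨F, (mem_homogeneousSubmodule _ _).mpr hF⟩, ?_⟩
  funext t
  by_cases hts : t = s
  · subst hts
    simp [evalMap, hFs]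
  · simp [evalMap, hts, hFW t t.2 (Subtype.coe_ne_coe.mpr hts)]

theorem coeff_toLinForm_pow (m : ℕ) (v : Fin (m+1) → ℂ) (d : ℕ) (α : Fin (m+1) →₀ ℕ) :
    coeff α (toLinForm m v ^ d) = if α.sum (fun _ k => k) = d then
      α.multinomial * α.prod (fun j k => v j ^ k) else 0 := by
  simp_rw [toLinForm, ← smul_eq_C_mul]
  exact coeff_linearCombination_X_pow_of_fintype v α d

theorem sum_mul_eval_eq_zero_of_sum_smul_pow_eq_zero {m d : ℕ} {ι : Type*} [Fintype ι]
    (v : ι → Fin (m+1) → ℂ) (c : ι → ℂ) (h : ∑ i, c i • toLinForm m (v i) ^ d = 0)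
    {F : MvPolynomial (Fin (m+1)) ℂ} (hF : F.IsHomogeneous d) :
    ∑ i, c i * eval (v i) F = 0 := by
  have hmon : ∀ α ∈ F.support, ∑ i, c i * α.prod (fun j k => v i j ^ k) = 0 := by
    intro α hα
    have hdeg : α.sum (fun _ k => k) = d := (hF.degree_eq_sum_deg_support hα).symm
    have hcoeff := congrArg (coeff α) h
    simp only [coeff_sum, coeff_smul, coeff_toLinForm_pow, hdeg, if_true, smul_eq_mul,
      coeff_zero] at hcoeff
    have hmult : (α.multinomial : ℂ) ≠ 0 := Nat.cast_ne_zero.mpr (Nat.multinomial_pos _ _).ne'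
    rw [← mul_right_inj' hmult, mul_zero, ← hcoeff, mul_sum]
    exact sum_congr rfl fun i _ => by ring
  calc ∑ i, c i * eval (v i) F
      = ∑ α ∈ F.support, coeff α F * ∑ i, c i * α.prod (fun j k => v i j ^ k) := by
        simp only [eval_eq, mul_sum, Finsupp.prod]
        rw [sum_comm]
        exact sum_congr rfl fun α _ => sum_congr rfl fun i _ => by ring
    _ = 0 := sum_eq_zero fun α hα => by rw [hmon α hα, mul_zero]

theorem linearIndependent_vpow_of_surjective_evalMap {m d : ℕ}
    {W : Finset (ℙ ℂ (Fin (m+1) → ℂ))} (h : Function.Surjective (evalMap m d W)) :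
    LinearIndependent ℂ
      (fun p : (W : Set (ℙ ℂ (Fin (m+1) → ℂ))) => vpow m d p) := by
  classical
  rw [Fintype.linearIndependent_iff]
  intro c hc p
  obtain ⟨⟨F, hF⟩, hFp⟩ := h (Pi.single p 1)
  have heval : ∀ t : W, eval (t : ℙ ℂ (Fin (m+1) → ℂ)).rep F = (Pi.single p 1 : W → ℂ) t :=
    fun t => by simpa [evalMap] using congrFun hFp t
  simpa [heval, Pi.single_apply] using sum_mul_eval_eq_zero_of_sum_smul_pow_eq_zero
    (fun t : W => (t : ℙ ℂ (Fin (m+1) → ℂ)).rep) c hc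
    ((mem_homogeneousSubmodule _ _).mp hF)

theorem points_on_conic_independent_general (d : ℕ)
    (q : QuadraticForm ℂ (Fin (2+1) → ℂ))
    (hq : q.polarBilin.Nondegenerate)
    (S : Finset (Projectivization ℂ (Fin (2+1) → ℂ)))
    (hSC : ∀ p ∈ S, q p.rep = 0)
    (hcard : S.card ≤ 2 * d + 1) :
    Function.Surjective (evalMap 2 d S) ∧
    LinearIndependent ℂ
      (fun p : (S : Set (Projectivization ℂ (Fin (2+1) → ℂ))) => vpow 2 d p) := by
  classical
  have hsurj : Function.Surjective (evalMap 2 d S) := by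
    refine surjective_evalMap_of_separating fun s hs => ?_
    obtain ⟨F, hF, hFS, hFs⟩ := exists_isHomogeneous_separating hq (hSC s hs) d (S.erase s)
      (fun t ht => hSC t (mem_of_mem_erase ht)) (notMem_erase s S)
      (by rw [card_erase_of_mem hs]; omega)
    exact ⟨F, hF, fun t ht hts => hFS t (mem_erase.mpr ⟨hts, ht⟩), hFs⟩
  exact ⟨hsurj, linearIndependent_vpow_of_surjective_evalMap hsurj⟩

/-- At most `2d + 1` points on a smooth conic `C ⊂ ℙ²` impose independent
conditions on degree-`d` forms; equivalently, the `d`-th powers of linear forms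
representing the points are linearly independent. -/
theorem points_on_conic_independent (d : ℕ) (hd : 1 ≤ d)
    (q : QuadraticForm ℂ (Fin (2+1) → ℂ))
    (hq : q.polarBilin.Nondegenerate)
    (S : Finset (Projectivization ℂ (Fin (2+1) → ℂ)))
    (hSC : ∀ p ∈ S, q p.rep = 0)
    (hcard : S.card ≤ 2 * d + 1) :
    Function.Surjective (evalMap 2 d S) ∧
    LinearIndependent ℂ
      (fun p : (S : Set (Projectivization ℂ (Fin (2+1) → ℂ))) => vpow 2 d p) :=
  points_on_conic_independent_general d q hq S hSC hcard

end
end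

section
/- Let W be a finite set of points of ℙ^N, let S ⊆ W be a linearly independent subset, and let W' ⊆ W be a subset with W ∖ W' ⊆ S; write S_3 := W ∖ W'. If dim ⟨W⟩ = dim ⟨W'⟩ + #S_3 (projective dimensions of linear spans), then ⟨W'⟩ ∩ ⟨S⟩ = ⟨S ∩ W'⟩. In particular, any point lying in ⟨W'⟩ ∩ ⟨S⟩ lies in the span of the proper subset S ∩ W' of S. -/
open Module

noncomputable section

/-- The projective linear span of a set of points of `ℙ^N`, as the linear span in
`ℂ^{N+1}` of representative vectors of the points. -/
def projSpan (N : ℕ) (S : Set (Projectivization ℂ (Fin (N+1) → ℂ))) :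
    Submodule ℂ (Fin (N+1) → ℂ) :=
  Submodule.span ℂ (Projectivization.rep '' S)

/-!
Split `S = (S ∩ W') ∪ S₃` and `W = W' ∪ S₃`. Since `⟨S₃⟩` has dimension at most `#S₃`,
Grassmann's formula turns `dim⟨W⟩ = dim⟨W'⟩ + #S₃` into `⟨W'⟩ ∩ ⟨S₃⟩ = 0`. As
`⟨S ∩ W'⟩ ≤ ⟨W'⟩`, the modular law then gives
`⟨W'⟩ ∩ (⟨S ∩ W'⟩ + ⟨S₃⟩) = ⟨S ∩ W'⟩ + ⟨W'⟩ ∩ ⟨S₃⟩ = ⟨S ∩ W'⟩`.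
-/

theorem sup_inf_eq_of_le_of_disjoint {α : Type*} [Lattice α] [OrderBot α] [IsModularLattice α]
    {a b c : α} (hca : c ≤ a) (hab : Disjoint a b) : a ⊓ (c ⊔ b) = c := by
  rw [inf_comm, sup_inf_assoc_of_le b hca, hab.symm.eq_bot, sup_bot_eq]

theorem Submodule.disjoint_of_finrank_sup_eq_add {K V : Type*} [DivisionRing K]
    [AddCommGroup V] [Module K V] {A B : Submodule K V} [FiniteDimensional K A]
    [FiniteDimensional K B] {n : ℕ} (hB : finrank K B ≤ n)
    (hsup : finrank K ↥(A ⊔ B) = finrank K A + n) : Disjoint A B := by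
  have hGrassmann := Submodule.finrank_sup_add_finrank_inf_eq A B
  rw [disjoint_iff, ← Submodule.finrank_eq_zero]
  omega

section projSpan

variable {N : ℕ}

theorem projSpan_mono {s t : Set (Projectivization ℂ (Fin (N+1) → ℂ))} (h : s ⊆ t) :
    projSpan N s ≤ projSpan N t :=
  Submodule.span_mono (Set.image_mono h)

theorem projSpan_union (s t : Set (Projectivization ℂ (Fin (N+1) → ℂ))) :
    projSpan N (s ∪ t) = projSpan N s ⊔ projSpan N t := by
  rw [projSpan, Set.image_union, Submodule.span_union]
  rfl

theorem finrank_projSpan_le_card (s : Finset (Projectivization ℂ (Fin (N+1) → ℂ))) :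
    finrank ℂ (projSpan N s) ≤ s.card := by
  classical
  rw [projSpan, ← Finset.coe_image]
  exact (finrank_span_finset_le_card _).trans Finset.card_image_le

end projSpan

theorem span_inter_eq_general (N : ℕ) [DecidableEq (Projectivization ℂ (Fin (N+1) → ℂ))]
    (W S W' : Finset (Projectivization ℂ (Fin (N+1) → ℂ)))
    (hSW : S ⊆ W) (hW'W : W' ⊆ W) (hres : W \ W' ⊆ S)
    (hdim : finrank ℂ (projSpan N (W : Set (Projectivization ℂ (Fin (N+1) → ℂ)))) =
      finrank ℂ (projSpan N (W' : Set (Projectivization ℂ (Fin (N+1) → ℂ)))) +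
        (W \ W').card) :
    projSpan N (W' : Set (Projectivization ℂ (Fin (N+1) → ℂ))) ⊓
      projSpan N (S : Set (Projectivization ℂ (Fin (N+1) → ℂ))) =
    projSpan N ((S ∩ W' : Finset (Projectivization ℂ (Fin (N+1) → ℂ))) :
      Set (Projectivization ℂ (Fin (N+1) → ℂ))) := by
  have hW : projSpan N W = projSpan N W' ⊔ projSpan N ↑(W \ W') := by
    rw [← projSpan_union, ← Finset.coe_union, Finset.union_sdiff_of_subset hW'W]
  have hS : projSpan N S = projSpan N ↑(S ∩ W') ⊔ projSpan N ↑(W \ W') := by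
    rw [← projSpan_union, ← Finset.coe_union]
    congr 2
    ext x
    grind
  rw [hW] at hdim
  have hdisj := Submodule.disjoint_of_finrank_sup_eq_add (finrank_projSpan_le_card _) hdim
  rw [hS]
  exact sup_inf_eq_of_le_of_disjoint
    (projSpan_mono (Finset.coe_subset.2 Finset.inter_subset_right)) hdisj

/-- **Step (a) of the proof of the main theorem of Ballico–Bernardi** (Grassmann
formula argument).  Let `W ⊂ ℙ^N` be a finite set, `S ⊆ W` a linearly
independent subset and `W' ⊆ W` with `S₃ := W ∖ W' ⊆ S`.  If
`dim⟨W⟩ = dim⟨W'⟩ + #S₃` then `⟨W'⟩ ∩ ⟨S⟩ = ⟨S ∩ W'⟩`; in particular any point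
of `⟨W'⟩ ∩ ⟨S⟩` lies in the span of the proper subset `S ∩ W'` of `S`. -/
theorem span_inter_eq (N : ℕ) [DecidableEq (Projectivization ℂ (Fin (N+1) → ℂ))]
    (W S W' : Finset (Projectivization ℂ (Fin (N+1) → ℂ)))
    (hSW : S ⊆ W) (hW'W : W' ⊆ W) (hres : W \ W' ⊆ S)
    (hSind : finrank ℂ
      (projSpan N (S : Set (Projectivization ℂ (Fin (N+1) → ℂ)))) = S.card)
    (hdim : finrank ℂ (projSpan N (W : Set (Projectivization ℂ (Fin (N+1) → ℂ)))) =
      finrank ℂ (projSpan N (W' : Set (Projectivization ℂ (Fin (N+1) → ℂ)))) +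
        (W \ W').card) :
    projSpan N (W' : Set (Projectivization ℂ (Fin (N+1) → ℂ))) ⊓
      projSpan N (S : Set (Projectivization ℂ (Fin (N+1) → ℂ))) =
    projSpan N ((S ∩ W' : Finset (Projectivization ℂ (Fin (N+1) → ℂ))) :
      Set (Projectivization ℂ (Fin (N+1) → ℂ))) :=
  span_inter_eq_general N W S W' hSW hW'W hres hdim

end
end
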